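/- Let two tagged pentatopes of the same type 0 arise from the subdivision tagging of two prisms over distinct tetrahedra T, T' sharing a common triangular face, within the same time slab. If the two pentatopes share a hyperface, then their vertex orderings (determined by the fixed color order D,C,B,A of spatial labels followed by primed copies) agree in all but one position, and hence they are reflected neighbors. -/

import Mathlib

/-- A tagged pentatope: an ordered 5-tuple of vertices together with a type γ ∈ {0,1,2,3}. -/
structure TP (V : Type*) where
  v : Fin 5 → V
  γ : Fin 4

/-- The vertex permutation used in Stevenson's reflection, depending on the type. -/
def refPerm (γ : Fin 4) : Fin 5 → Fin 5 :=
  if γ = 0 then ![4, 3, 2, 1, 0]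
  else if γ = 1 then ![4, 1, 3, 2, 0]
  else ![4, 1, 2, 3, 0]

/-- The reflection of a tagged pentatope. -/
def TP.reflect {V : Type*} (t : TP V) : TP V := ⟨t.v ∘ refPerm t.γ, t.γ⟩

/-- Two vertex orderings agree in all but (at most) one position. -/
def agreeButOne {V : Type*} (u w : Fin 5 → V) : Prop :=
  ∃ i : Fin 5, ∀ j : Fin 5, j ≠ i → u j = w j

/-- Reflected neighbors: same type, share a hyperface (four common vertices), and the
vertex order of t' matches that of t or of its reflection t_R in all but one
position. -/
def ReflNbr {V : Type*} (t t' : TP V) : Prop :=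
  t.γ = t'.γ ∧ (Set.range t.v ∩ Set.range t'.v).encard = 4 ∧
    (agreeButOne t.v t'.v ∨ agreeButOne t.reflect.v t'.v)

/-- ψ_t : ℝ³ → ℝ⁴, appending the coordinate t. -/
def lift (t : ℝ) (x : Fin 3 → ℝ) : Fin 4 → ℝ := Fin.snoc x t

/-- The subdivision tagging of the prism over a tetrahedron `u : Fin 4 → ℝ³`
(vertices indexed by their colors A = 0, B = 1, C = 2, D = 3), extruded between
times r and s: t₁ = (x_D,x_C,x_B,x_A,x_D')₀, t₂ = (x_C,x_B,x_A,x_D',x_C')₀,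
t₃ = (x_B,x_A,x_D',x_C',x_B')₀, t₄ = (x_A,x_D',x_C',x_B',x_A')₀. -/
def tagOf (r s : ℝ) (u : Fin 4 → (Fin 3 → ℝ)) : Fin 4 → TP (Fin 4 → ℝ)
  | 0 => ⟨![lift r (u 3), lift r (u 2), lift r (u 1), lift r (u 0), lift s (u 3)], 0⟩
  | 1 => ⟨![lift r (u 2), lift r (u 1), lift r (u 0), lift s (u 3), lift s (u 2)], 0⟩
  | 2 => ⟨![lift r (u 1), lift r (u 0), lift s (u 3), lift s (u 2), lift s (u 1)], 0⟩
  | 3 => ⟨![lift r (u 0), lift s (u 3), lift s (u 2), lift s (u 1), lift s (u 0)], 0⟩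

/-!
Label the vertices of the prism over `u` by (time level, color). The `i`-th pentatope of
`tagOf` is the window of positions `i, …, i + 4` in the sequence `D, C, B, A, D', C', B', A'`.
If `w` differs from `v` only at color `L`, all these vertices are lifts of the five distinct
points `v 0, …, v 3, w L`, and the vertices shared by a `v`-window and a `w`-window are the
positions common to both windows whose color is not `L`. Any four consecutive positions
contain every color, so four shared vertices force the two windows to start at the same
position and to contain color `L` only once; they then differ exactly there. This last
step is a finite check over `L, i, j`.
-/

open Function Set

theorem agreeButOne.comp {α β : Type*} {f g : Fin 5 → α} (h : agreeButOne f g) (e : α → β) :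
    agreeButOne (e ∘ f) (e ∘ g) :=
  let ⟨i, hi⟩ := h
  ⟨i, fun j hj => congrArg e (hi j hj)⟩

theorem encard_range_comp_inter_range_comp {ι α β : Type*} [Fintype ι] [DecidableEq α]
    {e : α → β} (he : Injective e) (f g : ι → α) :
    (range (e ∘ f) ∩ range (e ∘ g)).encard =
      (Finset.univ.image f ∩ Finset.univ.image g).card := by
  rw [range_comp, range_comp, ← image_inter he, he.encard_image, ← encard_coe_eq_coe_finsetCard]
  simp

/-- Position `k` of the `i`-th pentatope is term `i + k` of `D, C, B, A, D', C', B', A'`. -/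
def windowLabel (i : Fin 4) (k : Fin 5) : Bool × Fin 4 :=
  (decide (4 ≤ (i : ℕ) + k), 3 - Fin.ofNat 4 (i + k))

def slabVertex {α : Type*} (r s : ℝ) (p : α → Fin 3 → ℝ) (x : Bool × α) : Fin 4 → ℝ :=
  lift (bif x.1 then s else r) (p x.2)

theorem slabVertex_injective {α : Type*} {r s : ℝ} (hrs : r ≠ s) {p : α → Fin 3 → ℝ}
    (hp : Injective p) : Injective (slabVertex r s p) := by
  rintro ⟨a, x⟩ ⟨b, y⟩ h
  unfold slabVertex lift at h
  obtain ⟨hxy, hab⟩ := Fin.snoc_injective2 h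
  obtain rfl : a = b := by cases a <;> cases b <;> simp_all [eq_comm]
  exact Prod.ext rfl (hp hxy)

theorem tagOf_v_comp {α : Type*} (r s : ℝ) (p : α → Fin 3 → ℝ) (σ : Fin 4 → α) (i : Fin 4) :
    (tagOf r s (p ∘ σ) i).v = slabVertex r s p ∘ Prod.map id σ ∘ windowLabel i := by
  funext k
  fin_cases i <;> fin_cases k <;> rfl

theorem tagOf_γ (r s : ℝ) (u : Fin 4 → Fin 3 → ℝ) (i : Fin 4) : (tagOf r s u i).γ = 0 := by
  fin_cases i <;> rfl

def replaceColor (L c : Fin 4) : Fin 4 ⊕ Unit := if c = L then .inr () else .inl c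

theorem exists_injective_comp_of_eq_off {X : Type*} {v w : Fin 4 → X} (hv : Injective v)
    (hw : Injective w) {L : Fin 4} (hvw : ∀ k, k ≠ L → v k = w k) (hL : v L ≠ w L) :
    ∃ p : Fin 4 ⊕ Unit → X, Injective p ∧ v = p ∘ Sum.inl ∧ w = p ∘ replaceColor L := by
  refine ⟨Sum.elim v fun _ => w L, ?_, rfl, funext fun k => ?_⟩
  · refine Sum.elim_injective.2 ⟨hv, fun _ _ _ => rfl, fun k _ h => ?_⟩
    by_cases hk : k = L
    · exact hL (hk ▸ h)
    · exact hk (hw ((hvw k hk).symm.trans h))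
  · by_cases hk : k = L
    · simp [replaceColor, hk]
    · simp [replaceColor, hk, hvw k hk]

theorem agreeButOne_of_card_inter_eq_four : ∀ L i j : Fin 4,
    (Finset.univ.image (Prod.map id Sum.inl ∘ windowLabel i) ∩
      Finset.univ.image (Prod.map id (replaceColor L) ∘ windowLabel j)).card = 4 →
    agreeButOne (Prod.map id Sum.inl ∘ windowLabel i)
      (Prod.map id (replaceColor L) ∘ windowLabel j) := by
  unfold agreeButOne
  decide

/-- For two tetrahedra of a 4-colored conforming mesh sharing a common
triangular face (so they agree except at the vertex of one color L), extruded in the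
same time slab, any two pentatopes of their subdivision taggings that share a hyperface
have vertex orderings agreeing in all but one position, and hence are reflected
neighbors. -/
theorem same_slab_shared_hyperface_reflected_neighbors
    (v w : Fin 4 → (Fin 3 → ℝ))
    (hv : AffineIndependent ℝ v) (hw : AffineIndependent ℝ w)
    (hface : ∃ L : Fin 4, (∀ k : Fin 4, k ≠ L → v k = w k) ∧ v L ≠ w L)
    (r s : ℝ) (hrs : r < s) :
    ∀ i j : Fin 4,
      (Set.range (tagOf r s v i).v ∩ Set.range (tagOf r s w j).v).encard = 4 →
      agreeButOne (tagOf r s v i).v (tagOf r s w j).v ∧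
        ReflNbr (tagOf r s v i) (tagOf r s w j) := by
  intro i j hcard
  obtain ⟨L, hvw, hL⟩ := hface
  obtain ⟨p, hp, rfl, rfl⟩ := exists_injective_comp_of_eq_off hv.injective hw.injective hvw hL
  have habo : agreeButOne (tagOf r s (p ∘ Sum.inl) i).v (tagOf r s (p ∘ replaceColor L) j).v := by
    have he := slabVertex_injective hrs.ne hp
    rw [tagOf_v_comp, tagOf_v_comp] at hcard ⊢
    rw [encard_range_comp_inter_range_comp he] at hcard
    exact (agreeButOne_of_card_inter_eq_four L i j (by exact_mod_cast hcard)).comp _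
  exact ⟨habo, (tagOf_γ ..).trans (tagOf_γ ..).symm, hcard, Or.inl habo⟩
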